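/- With f and g as in the SCA surrogate construction (f(γ) = −(qᴴγ + γᵀBγ)*(qᴴγ + γᵀBγ) and g the surrogate defined at point γ_i with parameter K), the gradients of f and g with respect to (Re γ, Im γ) coincide at γ = γ_i; equivalently ∂f/∂γ*|_{γ=γ_i} = ∂g/∂γ*|_{γ=γ_i} in the sense of Wirtinger calculus. -/

import Mathlib

open Matrix

/-- The surrogate matrix `Q_i = q qᴴ + q γ_iᵀ B + Bᴴ γ_i* qᴴ + Bᴴ γ_i* γ_iᵀ B`. -/
noncomputable def Qmat {N : ℕ} (q γi : Fin N → ℂ) (B : Matrix (Fin N) (Fin N) ℂ) :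
    Matrix (Fin N) (Fin N) ℂ :=
  vecMulVec q (star q) + vecMulVec q γi * B + Bᴴ * vecMulVec (star γi) (star q) +
    Bᴴ * vecMulVec (star γi) γi * B

/-- Objective `f(γ) = −(qᴴγ + γᵀBγ)*(qᴴγ + γᵀBγ) = −|qᴴγ + γᵀBγ|²`. -/
noncomputable def fObj {N : ℕ} (q : Fin N → ℂ) (B : Matrix (Fin N) (Fin N) ℂ)
    (γ : Fin N → ℂ) : ℝ :=
  -Complex.normSq (star q ⬝ᵥ γ + γ ⬝ᵥ B.mulVec γ)

/-- The SCA surrogate function `g(γ|γ_i)`. -/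
noncomputable def gSurr {N : ℕ} (q γi : Fin N → ℂ) (B : Matrix (Fin N) (Fin N) ℂ)
    (K : ℝ) (γ : Fin N → ℂ) : ℂ :=
  -(star γ ⬝ᵥ (Qmat q γi B).mulVec γ)
    + (K : ℂ) * ∑ j, (Complex.normSq (γ j - γi j) : ℂ)
    - (star γi ⬝ᵥ q) * (γ ⬝ᵥ B.mulVec γi)
    - (star γi ⬝ᵥ Bᴴ.mulVec (star γ)) * (star q ⬝ᵥ γi)
    - (star γi ⬝ᵥ Bᴴ.mulVec (star γ)) * (γi ⬝ᵥ B.mulVec γi)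
    - (star γi ⬝ᵥ Bᴴ.mulVec (star γi)) * (γ ⬝ᵥ B.mulVec γi)

/-! Write `s γ = qᴴγ + γᵀBγ` and `ℓ γ = wγ` with the row vector `w = qᴴ + γ_iᵀB`. The surrogate
matrix is the rank-one matrix `Q_i = wᴴw`, so `γᴴQ_iγ = |ℓ γ|²`, and the four remaining cross
terms of `g` pair off into complex conjugates:
`Re g = -|ℓ γ|² + K‖γ - γ_i‖² - 2 Re(conj(s γ_i) γᵀBγ_i)`.
Since `ℓ γ_i = s γ_i`, the derivative of `s` at `γ_i` is that of `ℓ` plus `ε ↦ εᵀBγ_i`, and the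
proximal term is stationary at `γ_i`, both real gradients equal `-2 Re(conj(s γ_i) · ds)`. -/

section Surrogate
variable {E F : Type*} [NormedAddCommGroup E] [NormedSpace ℝ E]
  [NormedAddCommGroup F] [InnerProductSpace ℝ F]

theorem ContinuousLinearMap.hasFDerivAt_apply_self (β : E →L[ℝ] E →L[ℝ] F) (x : E) :
    HasFDerivAt (fun y => β y y) (β x + β.flip x) x := by
  refine (β.hasFDerivAt_of_bilinear (hasFDerivAt_id x) (hasFDerivAt_id x)).congr_fderiv ?_
  ext ε
  simp

theorem hasFDerivAt_sum_sq_norm_sub_self {ι : Type*} [Fintype ι] (x : ι → F) :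
    HasFDerivAt (fun y : ι → F => ∑ j, ‖y j - x j‖ ^ 2) (0 : (ι → F) →L[ℝ] ℝ) x := by
  have h := HasFDerivAt.fun_sum (u := Finset.univ) fun j _ =>
    ((hasFDerivAt_apply j x).sub_const (x j)).norm_sq
  simpa using h

theorem fderiv_neg_sq_norm_eq_fderiv_surrogate {φ : E → F} {x : E} (hφ : DifferentiableAt ℝ φ x)
    (β : E →L[ℝ] E →L[ℝ] F) {r : E → ℝ} (hr : HasFDerivAt r (0 : E →L[ℝ] ℝ) x) (K : ℝ) :
    fderiv ℝ (fun y => -‖φ y + β y y‖ ^ 2) x =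
      fderiv ℝ (fun y => -‖φ y + β x y‖ ^ 2 + K * r y - 2 * inner ℝ (φ x + β x x) (β y x)) x := by
  have hs := (hφ.hasFDerivAt.fun_add (β.hasFDerivAt_apply_self x)).norm_sq.fun_neg
  have hℓ := (hφ.hasFDerivAt.fun_add (β x).hasFDerivAt).norm_sq.fun_neg
  have hc : HasFDerivAt (fun y => inner ℝ (φ x + β x x) (β y x))
      ((innerSL ℝ (φ x + β x x)).comp (β.flip x)) x :=
    ((innerSL ℝ (φ x + β x x)).comp (β.flip x)).hasFDerivAt
  have hg := (hℓ.fun_add (hr.const_mul K)).fun_sub (hc.const_mul 2)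
  rw [hs.fderiv, hg.fderiv]
  ext ε
  simp only [map_add, ContinuousLinearMap.comp_add, ContinuousLinearMap.add_comp, smul_add,
    neg_add_rev, _root_.add_apply, _root_.neg_apply, _root_.smul_apply,
    ContinuousLinearMap.comp_apply, ContinuousLinearMap.flip_apply, coe_innerSL_apply,
    nsmul_eq_mul, Nat.cast_ofNat, smul_zero, add_zero, _root_.sub_apply, smul_eq_mul]
  ring

end Surrogate

namespace Matrix
variable {ι 𝕜 : Type*} [Fintype ι] [RCLike 𝕜]

noncomputable def dotProductMulVecCLM (A : Matrix ι ι 𝕜) : (ι → 𝕜) →L[ℝ] (ι → 𝕜) →L[ℝ] 𝕜 :=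
  (((dotProductBilin 𝕜 𝕜).compl₂ A.mulVecLin).restrictScalars₁₂ ℝ ℝ).toContinuousBilinearMap

@[simp] theorem dotProductMulVecCLM_apply (A : Matrix ι ι 𝕜) (x y : ι → 𝕜) :
    A.dotProductMulVecCLM x y = x ⬝ᵥ A *ᵥ y := rfl

theorem star_dotProduct_conjTranspose_mulVec_star (A : Matrix ι ι 𝕜) (x y : ι → 𝕜) :
    star x ⬝ᵥ Aᴴ *ᵥ star y = star (y ⬝ᵥ A *ᵥ x) := by
  rw [← star_vecMul, star_dotProduct_star, dotProduct_mulVec]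

end Matrix

section
variable {N : ℕ}

theorem Qmat_eq_vecMulVec (q γi : Fin N → ℂ) (B : Matrix (Fin N) (Fin N) ℂ) :
    Qmat q γi B = vecMulVec (star (star q + γi ᵥ* B)) (star q + γi ᵥ* B) := by
  simp only [Qmat, vecMulVec_mul, mul_vecMulVec, add_vecMulVec, vecMulVec_add, star_add,
    star_star, star_vecMul]
  abel

theorem star_dotProduct_Qmat_mulVec_self (q γi : Fin N → ℂ) (B : Matrix (Fin N) (Fin N) ℂ)
    (γ : Fin N → ℂ) :
    star γ ⬝ᵥ Qmat q γi B *ᵥ γ = (‖star q ⬝ᵥ γ + γi ⬝ᵥ B *ᵥ γ‖ ^ 2 : ℝ) := by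
  rw [Qmat_eq_vecMulVec, vecMulVec_mulVec, dotProduct_smul, star_dotProduct_star, add_dotProduct,
    ← dotProduct_mulVec, op_smul_eq_mul, Complex.star_def, Complex.conj_mul', Complex.ofReal_pow]

theorem re_gSurr (q γi : Fin N → ℂ) (B : Matrix (Fin N) (Fin N) ℂ) (K : ℝ) (γ : Fin N → ℂ) :
    (gSurr q γi B K γ).re = -‖star q ⬝ᵥ γ + γi ⬝ᵥ B *ᵥ γ‖ ^ 2 + K * ∑ j, ‖γ j - γi j‖ ^ 2
      - 2 * inner ℝ (star q ⬝ᵥ γi + γi ⬝ᵥ B *ᵥ γi) (γ ⬝ᵥ B *ᵥ γi) := by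
  rw [gSurr, star_dotProduct_Qmat_mulVec_self, star_dotProduct_conjTranspose_mulVec_star,
    star_dotProduct_conjTranspose_mulVec_star, star_dotProduct γi q, Complex.inner]
  simp only [Complex.sub_re, Complex.add_re, Complex.neg_re, Complex.ofReal_re, Complex.mul_re,
    Complex.ofReal_im, Complex.re_sum, Complex.normSq_eq_norm_sq, Complex.star_def,
    Complex.conj_re, Complex.conj_im, Complex.add_im, map_add]
  ring

end

/-- The gradients of `f` and of the surrogate `g` with respect to
`(Re γ, Im γ)` coincide at `γ = γ_i`. -/
theorem grad_f_eq_grad_g {N : ℕ} (q γi : Fin N → ℂ) (B : Matrix (Fin N) (Fin N) ℂ)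
    (K : ℝ) :
    fderiv ℝ (fun γ : Fin N → ℂ => fObj q B γ) γi =
      fderiv ℝ (fun γ : Fin N → ℂ => (gSurr q γi B K γ).re) γi := by
  set β := B.dotProductMulVecCLM
  have hf : (fun γ => fObj q B γ) = fun γ => -‖star q ⬝ᵥ γ + β γ γ‖ ^ 2 := by
    funext γ
    rw [fObj, Complex.normSq_eq_norm_sq]
    rfl
  have hg : (fun γ => (gSurr q γi B K γ).re) = fun γ => -‖star q ⬝ᵥ γ + β γi γ‖ ^ 2
      + K * ∑ j, ‖γ j - γi j‖ ^ 2 - 2 * inner ℝ (star q ⬝ᵥ γi + β γi γi) (β γ γi) :=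
    funext (re_gSurr q γi B K)
  rw [hf, hg]
  exact fderiv_neg_sq_norm_eq_fderiv_surrogate (by unfold dotProduct; fun_prop) β
    (hasFDerivAt_sum_sq_norm_sub_self γi) K
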